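/- arXiv:1207.1944 — 2 statements merged into one kernel-verified Lean document; each statement's English description precedes it below -/
import Mathlib

section
/- Let a : ℝⁿ × ℝⁿ → ℝ be a positive definite symmetric bilinear form with associated quadratic form α²(y) = a(y,y), and let β(y) = ⟨b, y⟩ be a nonzero linear form (b ≠ 0). Suppose η : ℝⁿ → ℝ is a linear form and f ∈ ℝ satisfies η(y)·β(y) + f·α²(y) = 0 for all y ∈ ℝⁿ. Then f = 0 and η = 0. -/
/-! On a nonzero `y` in the hyperplane `β = 0`, which exists because `n ≥ 2`, the identity reads
`f·α²(y) = 0` with `α²(y) > 0`, so `f = 0`. Then `η·β` vanishes identically, and a product of two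
linear forms can only vanish identically if one of the factors does: if `η u ≠ 0` and `β w ≠ 0`,
then `β u = η w = 0` and evaluating at `u + w` leaves `η u · β w = 0`. -/

namespace LinearMap

theorem eq_zero_or_eq_zero_of_forall_mul_apply_eq_zero {R M : Type*} [CommSemiring R]
    [NoZeroDivisors R] [AddCommMonoid M] [Module R M] {φ ψ : M →ₗ[R] R}
    (h : ∀ v, φ v * ψ v = 0) : φ = 0 ∨ ψ = 0 := by
  by_contra! hne
  obtain ⟨u, hu⟩ := DFunLike.ne_iff.mp hne.1
  obtain ⟨w, hw⟩ := DFunLike.ne_iff.mp hne.2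
  have hψu : ψ u = 0 := (mul_eq_zero.mp (h u)).resolve_left hu
  have hφw : φ w = 0 := (mul_eq_zero.mp (h w)).resolve_right hw
  have := h (u + w)
  simp only [map_add, hψu, hφw, add_zero, zero_add] at this
  exact mul_ne_zero hu hw this

theorem exists_ne_zero_apply_eq_zero {K V : Type*} [Field K] [AddCommGroup V] [Module K V]
    [FiniteDimensional K V] (φ : V →ₗ[K] K) (hV : 1 < Module.finrank K V) :
    ∃ v ≠ 0, φ v = 0 := by
  have hker : ker φ ≠ ⊥ := ker_ne_bot_of_finrank_lt (by rwa [Module.finrank_self])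
  obtain ⟨v, hv, hv0⟩ := Submodule.exists_mem_ne_zero_of_ne_bot hker
  exact ⟨v, hv0, hv⟩

end LinearMap

theorem Matrix.PosDef.sum_sum_mul_mul_pos {ι : Type*} [Fintype ι] {A : Matrix ι ι ℝ}
    (hA : A.PosDef) {y : ι → ℝ} (hy : y ≠ 0) : 0 < ∑ i, ∑ j, A i j * y i * y j := by
  have hquad : ∑ i, ∑ j, A i j * y i * y j = star y ⬝ᵥ A.mulVec y := by
    simp only [star_trivial, dotProduct, mulVec, Finset.mul_sum]
    exact Finset.sum_congr rfl fun i _ => Finset.sum_congr rfl fun j _ => by ring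
  rw [hquad]
  exact hA.dotProduct_mulVec_pos hy

/-- If a linear form `η` and a scalar `f` satisfy `η(y)·β(y) + f·α²(y) = 0` for all `y`,
with `α²` positive definite and `β` a nonzero linear form, `n ≥ 2`, then `f = 0` and `η = 0`. -/
theorem stmt1 (n : ℕ) (hn : 2 ≤ n) (a : Matrix (Fin n) (Fin n) ℝ) (ha : a.PosDef)
    (b : Fin n → ℝ) (hb : b ≠ 0) (η : (Fin n → ℝ) →ₗ[ℝ] ℝ) (f : ℝ)
    (h : ∀ y : Fin n → ℝ,
      η y * (∑ i, b i * y i) + f * (∑ i, ∑ j, a i j * y i * y j) = 0) :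
    f = 0 ∧ η = 0 := by
  set β := dotProductEquiv ℝ (Fin n) b
  have hβ : ∀ y, β y = ∑ i, b i * y i := fun y => rfl
  obtain ⟨y, hy0, hβy⟩ := β.exists_ne_zero_apply_eq_zero (by rw [Module.finrank_fin_fun]; lia)
  have hf : f = 0 := by
    have hfy := h y
    rw [← hβ, hβy, mul_zero, zero_add] at hfy
    exact (mul_eq_zero.mp hfy).resolve_right (ha.sum_sum_mul_mul_pos hy0).ne'
  have hβ0 : β ≠ 0 := (dotProductEquiv ℝ (Fin n)).map_ne_zero_iff.mpr hb
  refine ⟨hf, (LinearMap.eq_zero_or_eq_zero_of_forall_mul_apply_eq_zero fun y => ?_).resolve_right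
    hβ0⟩
  simpa [hf, hβ] using h y
end

section
/- Let h be a positive definite quadratic form on ℝⁿ (n ≥ 2) with norm ‖·‖_h, let W ∈ ℝⁿ, and let α² be another positive definite quadratic form with associated linear form β(y) = ⟨b, y⟩_α, b ≠ 0. If h(y)·β(y)² - 2⟨W, y⟩_h·β(y)·α²(y) + (‖W‖_h² - 1)·α²(y)² = 0 for all y, and moreover h = e^{2ρ}·α² for some constant ρ, then ‖W‖_h = 1 and 2⟨W, y⟩_h = e^{2ρ}·β(y) for all y. -/
/-!
Dividing the identity by `α²(y) > 0` leaves `e β² - 2 W₀ β + (‖W‖_h² - 1) α² = 0` for `y ≠ 0`,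
where `e = e^{2ρ}`. Evaluated at a nonzero vector of `ker β`, which exists since `n ≥ 2`, this gives
`‖W‖_h = 1`. Then `β · (e β - 2 W₀)` vanishes identically, and a product of two linear forms
vanishes only if one factor does; `β ≠ 0` because `β(b) = α²(b) > 0`.
-/

open Module

theorem LinearMap.eq_zero_of_forall_mul_eq_zero {R V : Type*} [CommSemiring R] [NoZeroDivisors R]
    [AddCommMonoid V] [Module R V] {β ℓ : V →ₗ[R] R} (hβ : β ≠ 0) (h : ∀ y, β y * ℓ y = 0) :
    ℓ = 0 := by
  obtain ⟨b, hb⟩ : ∃ b, β b ≠ 0 := by simpa [LinearMap.ext_iff] using hβ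
  have hℓb : ℓ b = 0 := (mul_eq_zero.mp (h b)).resolve_left hb
  ext y
  by_cases hy : β y = 0
  · have := (mul_eq_zero.mp (h (y + b))).resolve_left (by simpa [hy] using hb)
    simpa [hℓb] using this
  · exact (mul_eq_zero.mp (h y)).resolve_left hy

theorem LinearMap.exists_ne_zero_apply_eq_zero_s2 {K V : Type*} [Field K] [AddCommGroup V]
    [Module K V] [FiniteDimensional K V] (hV : 1 < finrank K V) (f : V →ₗ[K] K) :
    ∃ y ≠ 0, f y = 0 := by
  obtain ⟨y, hy, hy0⟩ := Submodule.exists_mem_ne_zero_of_ne_bot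
    (f.ker_ne_bot_of_finrank_lt (by rwa [finrank_self]))
  exact ⟨y, hy0, hy⟩

theorem Matrix.toLinearMap₂'_apply_eq_sum {R ι : Type*} [CommSemiring R] [Fintype ι]
    [DecidableEq ι] (M : Matrix ι ι R) (x y : ι → R) :
    toLinearMap₂' R M x y = ∑ i, ∑ j, x i * M i j * y j := by
  simp only [toLinearMap₂'_apply', dotProduct, mulVec, Finset.mul_sum, mul_assoc]

theorem Matrix.toLinearMap₂'_apply_self_eq_sum {R ι : Type*} [CommSemiring R] [Fintype ι]
    [DecidableEq ι] (M : Matrix ι ι R) (y : ι → R) :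
    toLinearMap₂' R M y y = ∑ i, ∑ j, M i j * y i * y j := by
  simp only [toLinearMap₂'_apply_eq_sum, mul_comm (y _) (M _ _)]

theorem eq_one_and_two_mul_eq_of_navigation_identity {V : Type*} [AddCommGroup V] [Module ℝ V]
    [FiniteDimensional ℝ V] (hV : 1 < finrank ℝ V) {β W₀ : V →ₗ[ℝ] ℝ} (hβ : β ≠ 0) {Q : V → ℝ}
    (hQ : ∀ y ≠ 0, Q y ≠ 0) {e c : ℝ}
    (key : ∀ y, e * Q y * β y ^ 2 - 2 * W₀ y * β y * Q y + (c - 1) * Q y ^ 2 = 0) :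
    c = 1 ∧ ∀ y, 2 * W₀ y = e * β y := by
  have quot : ∀ y ≠ 0, e * β y ^ 2 - 2 * W₀ y * β y + (c - 1) * Q y = 0 := fun y hy =>
    (mul_eq_zero.mp (by linear_combination key y)).resolve_left (hQ y hy)
  have hc : c = 1 := by
    obtain ⟨y, hy, hβy⟩ := β.exists_ne_zero_apply_eq_zero_s2 hV
    have h : (c - 1) * Q y = 0 := by
      linear_combination quot y hy + (2 * W₀ y - e * β y) * hβy
    linarith [(mul_eq_zero.mp h).resolve_right (hQ y hy)]
  have hℓ : e • β - (2 : ℝ) • W₀ = 0 := LinearMap.eq_zero_of_forall_mul_eq_zero hβ fun y => by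
    rcases eq_or_ne y 0 with rfl | hy
    · simp
    · simp only [LinearMap.sub_apply, LinearMap.smul_apply, smul_eq_mul]
      linear_combination quot y hy - Q y * hc
  refine ⟨hc, fun y => ?_⟩
  have hy := LinearMap.congr_fun hℓ y
  simp only [LinearMap.sub_apply, LinearMap.smul_apply, smul_eq_mul, LinearMap.zero_apply] at hy
  linarith

theorem stmt2_general (n : ℕ) (hn : 2 ≤ n) (A H : Matrix (Fin n) (Fin n) ℝ)
    (hA : A.PosDef) (W b : Fin n → ℝ) (hb : b ≠ 0) (ρ : ℝ)
    (hconf : ∀ i j, H i j = Real.exp (2 * ρ) * A i j)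
    (key : ∀ y : Fin n → ℝ,
      (∑ i, ∑ j, H i j * y i * y j) * (∑ i, ∑ j, b i * A i j * y j) ^ 2
        - 2 * (∑ i, ∑ j, W i * H i j * y j) * (∑ i, ∑ j, b i * A i j * y j)
            * (∑ i, ∑ j, A i j * y i * y j)
        + ((∑ i, ∑ j, W i * H i j * W j) - 1) * (∑ i, ∑ j, A i j * y i * y j) ^ 2 = 0) :
    (∑ i, ∑ j, W i * H i j * W j) = 1 ∧
    ∀ y : Fin n → ℝ, 2 * (∑ i, ∑ j, W i * H i j * y j)
      = Real.exp (2 * ρ) * (∑ i, ∑ j, b i * A i j * y j) := by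
  have hH : ∀ y : Fin n → ℝ,
      Matrix.toLinearMap₂' ℝ H y y = Real.exp (2 * ρ) * Matrix.toLinearMap₂' ℝ A y y := by
    simp [show H = Real.exp (2 * ρ) • A from Matrix.ext hconf]
  have hQ : ∀ y : Fin n → ℝ, y ≠ 0 → Matrix.toLinearMap₂' ℝ A y y ≠ 0 := fun y hy => by
    rw [Matrix.toLinearMap₂'_apply']
    exact (hA.dotProduct_mulVec_pos hy).ne'
  have hβ : (Matrix.toLinearMap₂' ℝ A b : (Fin n → ℝ) →ₗ[ℝ] ℝ) ≠ 0 := fun h =>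
    hQ b hb (by rw [h, LinearMap.zero_apply])
  have h := eq_one_and_two_mul_eq_of_navigation_identity (by simpa) hβ hQ
    (W₀ := Matrix.toLinearMap₂' ℝ H W) (c := ∑ i, ∑ j, W i * H i j * W j) fun y => by
      rw [← hH]
      simp only [Matrix.toLinearMap₂'_apply_self_eq_sum]
      simpa only [Matrix.toLinearMap₂'_apply_eq_sum] using key y
  simpa only [Matrix.toLinearMap₂'_apply_eq_sum] using h

/-- Navigation description key step: the identity
`h(y)β(y)² - 2⟨W,y⟩_h β(y)α²(y) + (‖W‖_h²-1)α²(y)² = 0` with `h = e^{2ρ}α²`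
forces `‖W‖_h = 1` and `2⟨W,y⟩_h = e^{2ρ}β(y)`. -/
theorem stmt2 (n : ℕ) (hn : 2 ≤ n) (A H : Matrix (Fin n) (Fin n) ℝ)
    (hA : A.PosDef) (hH : H.PosDef) (W b : Fin n → ℝ) (hb : b ≠ 0) (ρ : ℝ)
    (hconf : ∀ i j, H i j = Real.exp (2 * ρ) * A i j)
    (key : ∀ y : Fin n → ℝ,
      (∑ i, ∑ j, H i j * y i * y j) * (∑ i, ∑ j, b i * A i j * y j) ^ 2
        - 2 * (∑ i, ∑ j, W i * H i j * y j) * (∑ i, ∑ j, b i * A i j * y j)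
            * (∑ i, ∑ j, A i j * y i * y j)
        + ((∑ i, ∑ j, W i * H i j * W j) - 1) * (∑ i, ∑ j, A i j * y i * y j) ^ 2 = 0) :
    (∑ i, ∑ j, W i * H i j * W j) = 1 ∧
    ∀ y : Fin n → ℝ, 2 * (∑ i, ∑ j, W i * H i j * y j)
      = Real.exp (2 * ρ) * (∑ i, ∑ j, b i * A i j * y j) :=
  stmt2_general n hn A H hA W b hb ρ hconf key
end
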